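/- arXiv:1406.3672 — 2 statements merged into one kernel-verified Lean document; each statement's English description precedes it below -/
import Mathlib

section
/- Let S be a simple algebra over a ring R (i.e., S has no proper two-sided ideals and S² ≠ {0}) with nontrivial center. Then S has a two-sided multiplicative identity element e, and moreover e lies in the center Z(S). -/
/-- A simple algebra `S` over a ring `R` (no proper two-sided ideals and
`S² ≠ {0}` ) with nontrivial center has a two-sided identity element lying in its center. -/
theorem simple_algebra_has_central_identity
    {R S : Type*} [CommRing R] [NonUnitalRing S] [Module R S]
    (hsimple : ∀ I : TwoSidedIdeal S, I = ⊥ ∨ I = ⊤)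
    (hS2 : ∃ a b : S, a * b ≠ 0)
    (hcenter : ∃ z ∈ Set.center S, z ≠ 0) :
    ∃ e ∈ Set.center S, ∀ a : S, e * a = a ∧ a * e = a := by
  obtain ⟨z, hzc', hz0⟩ := hcenter
  have hzc : ∀ a : S, a * z = z * a := fun a => ((Set.mem_center_iff.mp hzc').comm a).symm
  obtain ⟨a0, b0, hab⟩ := hS2
  -- `z` does not annihilate everything
  have hcontra : ¬ (∀ s : S, z * s = 0) := by
    intro h
    set T : TwoSidedIdeal S := TwoSidedIdeal.mk' {x : S | ∀ s : S, x * s = 0 ∧ s * x = 0}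
      (by simp)
      (fun {x y} hx hy s => by rw [add_mul, mul_add, (hx s).1, (hy s).1, (hx s).2, (hy s).2]; simp)
      (fun {x} hx s => by rw [neg_mul, mul_neg, (hx s).1, (hx s).2]; simp)
      (fun {x y} hy s => by
        constructor
        · rw [mul_assoc, (hy s).1, mul_zero]
        · rw [← mul_assoc, (hy (s * x)).2])
      (fun {x y} hx s => by
        constructor
        · rw [mul_assoc, (hx (y*s)).1]
        · rw [← mul_assoc, (hx s).2, zero_mul]) with hT
    have hzT : z ∈ T := by
      rw [hT, TwoSidedIdeal.mem_mk']
      intro s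
      exact ⟨h s, by rw [hzc, h s]⟩
    rcases hsimple T with hbot | htop
    · rw [hbot, TwoSidedIdeal.mem_bot] at hzT
      exact hz0 hzT
    · have : a0 ∈ T := htop ▸ TwoSidedIdeal.mem_top _
      rw [hT, TwoSidedIdeal.mem_mk'] at this
      exact hab (this b0).1
  -- left multiplication by `z` is injective
  have hinj : ∀ s : S, z * s = 0 → s = 0 := by
    set A : TwoSidedIdeal S := TwoSidedIdeal.mk' {x : S | z * x = 0}
      (by simp)
      (fun {x y} hx hy => by simp only [Set.mem_setOf_eq] at *; rw [mul_add, hx, hy, add_zero])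
      (fun {x} hx => by simp only [Set.mem_setOf_eq] at *; rw [mul_neg, hx, neg_zero])
      (fun {x y} hy => by
        simp only [Set.mem_setOf_eq] at *
        rw [← mul_assoc, ← hzc x, mul_assoc, hy, mul_zero])
      (fun {x y} hx => by
        simp only [Set.mem_setOf_eq] at *
        rw [← mul_assoc, hx, zero_mul]) with hA
    rcases hsimple A with hbot | htop
    · intro s hs
      have : s ∈ A := by rw [hA, TwoSidedIdeal.mem_mk']; exact hs
      rwa [hbot, TwoSidedIdeal.mem_bot] at this
    · exfalso
      exact hcontra fun s => by
        have : s ∈ A := htop ▸ TwoSidedIdeal.mem_top _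
        rwa [hA, TwoSidedIdeal.mem_mk'] at this
  -- the ideal `zS` is everything
  set I : TwoSidedIdeal S := TwoSidedIdeal.mk' {x : S | ∃ s : S, x = z * s}
    (⟨0, by simp⟩)
    (fun {x y} ⟨s, hs⟩ ⟨t, ht⟩ => ⟨s + t, by rw [hs, ht, mul_add]⟩)
    (fun {x} ⟨s, hs⟩ => ⟨-s, by rw [hs, mul_neg]⟩)
    (fun {x y} ⟨s, hs⟩ => ⟨x * s, by rw [hs, ← mul_assoc, hzc x, mul_assoc]⟩)
    (fun {x y} ⟨s, hs⟩ => ⟨s * y, by rw [hs, mul_assoc]⟩) with hI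
  rcases hsimple I with hbot | htop
  · exfalso
    refine hcontra fun s => ?_
    have : z * s ∈ I := by rw [hI, TwoSidedIdeal.mem_mk']; exact ⟨s, rfl⟩
    rwa [hbot, TwoSidedIdeal.mem_bot] at this
  · have hzI : z ∈ I := htop ▸ TwoSidedIdeal.mem_top _
    rw [hI, TwoSidedIdeal.mem_mk'] at hzI
    obtain ⟨e, he⟩ := hzI
    have hleft : ∀ a : S, e * a = a := by
      intro a
      have : z * (e * a - a) = 0 := by
        rw [mul_sub, ← mul_assoc, ← he, sub_self]
      exact sub_eq_zero.mp (hinj _ this)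
    have hright : ∀ a : S, a * e = a := by
      intro a
      have : z * (a * e - a) = 0 := by
        rw [mul_sub, ← mul_assoc, ← hzc a, mul_assoc, ← he, hzc a, sub_self]
      exact sub_eq_zero.mp (hinj _ this)
    refine ⟨e, Semigroup.mem_center_iff.mpr fun g => by rw [hleft g, hright g], fun a => ⟨hleft a, hright a⟩⟩
end

section
/- Let f = ∏_{i=1}^n (x − ξ_i) ∈ 𝔽_p[x] be squarefree and completely splitting, let q ∈ 𝔽_p[x], and let f_q(x) = ∏_{i=1}^n (x − q(ξ_i)). If g_q is a nontrivial monic factor of f_q (i.e., 1 ≤ deg g_q < deg f_q and g_q ∣ f_q) whose roots are a proper nonempty subset of {q(ξ_i)}, then gcd(g_q(q(x)), f(x)) is a nontrivial factor of f. -/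
open Polynomial

/-!
Write `d = gcd(g_q ∘ q, f)`. At a root `ξ` of `f`, `d` vanishes exactly when `g_q (q ξ) = 0`.
A root `ξ_i` with `g_q (q ξ_i) = 0` forces `deg d > 0`; a root `ξ_j` with `g_q (q ξ_j) ≠ 0`
is a root of `f` but not of `d`, so the divisor `d` of `f` is not associated to `f` and has
smaller degree.
-/

namespace Polynomial

variable {K : Type*} [Field K]

theorem isRoot_gcd_comp_iff [DecidableEq K] {g q f : K[X]} {a : K} (hfa : f.IsRoot a) :
    (EuclideanDomain.gcd (g.comp q) f).IsRoot a ↔ g.IsRoot (q.eval a) := by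
  rw [isRoot_gcd_iff_isRoot_left_right, and_iff_left hfa, IsRoot.def, IsRoot.def, eval_comp]

theorem natDegree_pos_of_isRoot {p : K[X]} {a : K} (hp : p ≠ 0) (ha : p.IsRoot a) :
    0 < p.natDegree :=
  natDegree_pos_of_eval₂_root hp (RingHom.id K) ha fun _ => id

theorem natDegree_lt_of_dvd_of_not_isRoot {d f : K[X]} {a : K} (hdf : d ∣ f) (hf : f ≠ 0)
    (hfa : f.IsRoot a) (hda : ¬ d.IsRoot a) : d.natDegree < f.natDegree :=
  (natDegree_le_of_dvd hdf hf).lt_of_ne fun h =>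
    hda (hfa.dvd (associated_of_dvd_of_natDegree_le hdf hf h.ge).symm.dvd)

end Polynomial

theorem gcd_comp_nontrivial_factor_general
    {p : ℕ} [Fact p.Prime] {n : ℕ} (ξ : Fin n → ZMod p)
    (f : Polynomial (ZMod p)) (hf : f = ∏ i, (X - C (ξ i)))
    (q : Polynomial (ZMod p))
    (gq : Polynomial (ZMod p))
    (hne : ∃ i, gq.IsRoot (q.eval (ξ i))) (hproper : ∃ j, ¬ gq.IsRoot (q.eval (ξ j))) :
    EuclideanDomain.gcd (gq.comp q) f ∣ f ∧
      0 < (EuclideanDomain.gcd (gq.comp q) f).natDegree ∧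
      (EuclideanDomain.gcd (gq.comp q) f).natDegree < f.natDegree := by
  obtain ⟨i, hi⟩ := hne
  obtain ⟨j, hj⟩ := hproper
  have hf0 : f ≠ 0 := hf ▸ (monic_prod_of_monic _ _ fun k _ => monic_X_sub_C (ξ k)).ne_zero
  have hroot : ∀ k, f.IsRoot (ξ k) := fun k =>
    hf ▸ (isRoot_prod _ _ _).2 ⟨k, Finset.mem_univ k, root_X_sub_C.2 rfl⟩
  have hdf := EuclideanDomain.gcd_dvd_right (gq.comp q) f
  have hd0 : EuclideanDomain.gcd (gq.comp q) f ≠ 0 := fun h0 =>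
    hf0 (EuclideanDomain.gcd_eq_zero_iff.1 h0).2
  exact ⟨hdf, natDegree_pos_of_isRoot hd0 ((isRoot_gcd_comp_iff (hroot i)).2 hi),
    natDegree_lt_of_dvd_of_not_isRoot hdf hf0 (hroot j) ((isRoot_gcd_comp_iff (hroot j)).not.2 hj)⟩

/-- Let `f = ∏ (x - ξ_i)` be squarefree and completely splitting over `𝔽_p`,
`q ∈ 𝔽_p[x]`, and `f_q = ∏ (x - q(ξ_i))`.  If `g_q` is a nontrivial monic factor of `f_q`
whose roots form a proper nonempty subset of `{q(ξ_i)}`, then `gcd(g_q(q(x)), f)` is a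
nontrivial factor of `f`. -/
theorem gcd_comp_nontrivial_factor
    {p : ℕ} [Fact p.Prime] {n : ℕ} (ξ : Fin n → ZMod p) (hinj : Function.Injective ξ)
    (f : Polynomial (ZMod p)) (hf : f = ∏ i, (X - C (ξ i)))
    (q : Polynomial (ZMod p))
    (fq : Polynomial (ZMod p)) (hfq : fq = ∏ i, (X - C (q.eval (ξ i))))
    (gq : Polynomial (ZMod p)) (hmonic : gq.Monic) (hdvd : gq ∣ fq)
    (hdeg : 1 ≤ gq.natDegree) (hdeg' : gq.natDegree < fq.natDegree)
    (hne : ∃ i, gq.IsRoot (q.eval (ξ i))) (hproper : ∃ j, ¬ gq.IsRoot (q.eval (ξ j))) :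
    EuclideanDomain.gcd (gq.comp q) f ∣ f ∧
      0 < (EuclideanDomain.gcd (gq.comp q) f).natDegree ∧
      (EuclideanDomain.gcd (gq.comp q) f).natDegree < f.natDegree :=
  gcd_comp_nontrivial_factor_general ξ f hf q gq hne hproper
end
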